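/- arXiv:1003.1219 — 5 statements merged into one kernel-verified Lean document; each statement's English description precedes it below -/
import Mathlib

section
/- With abelian recollement gluing data, for every object N of 𝒜_U the intermediate extension j_!* N admits no nonzero subobject supported on Z: if X ↪ j_!* N is a monomorphism in 𝒜 with j^* X ≅ 0, then X ≅ 0. -/
/-!
Abelian recollement gluing data, abstracting the open immersion `j : U → S`:
abelian categories `A` and `B` (the latter playing the role of `𝒜_U`), an exact
functor `jstar : A ⥤ B` with a left adjoint `jlow` (`j_!`) and a right adjoint
`jup` (`j_*`), such that the unit of `j_! ⊣ j^*` and the counit of `j^* ⊣ j_*`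
are isomorphisms.  For `N : B`, `cmap N : j_! N ⟶ j_* N` is the unique morphism
whose image under `j^*` is `id_N` (under the canonical identifications), and the
intermediate extension `j_!* N` is its image.  "`X` is supported on `Z`" means
`j^* X ≅ 0`, i.e. `IsZero (jstar.obj X)`.
-/

open CategoryTheory CategoryTheory.Limits

variable {A : Type*} [Category A] [Abelian A]
variable {B : Type*} [Category B] [Abelian B]

/-- The canonical morphism `c_N : j_! N ⟶ j_* N`, corresponding under the
adjunction `j_! ⊣ j^*` to the inverse of the counit `j^* j_* N ≅ N`. -/
noncomputable def cmap (jstar : A ⥤ B) (jlow jup : B ⥤ A)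
    (adj1 : jlow ⊣ jstar) (adj2 : jstar ⊣ jup) [IsIso adj2.counit] (N : B) :
    jlow.obj N ⟶ jup.obj N :=
  (adj1.homEquiv N (jup.obj N)).symm (inv (adj2.counit.app N))

/-- The intermediate extension `j_!* N := Im (c_N : j_! N ⟶ j_* N)`. -/
noncomputable def interExt (jstar : A ⥤ B) (jlow jup : B ⥤ A)
    (adj1 : jlow ⊣ jstar) (adj2 : jstar ⊣ jup) [IsIso adj2.counit] (N : B) : A :=
  image (cmap jstar jlow jup adj1 adj2 N)

theorem CategoryTheory.Adjunction.eq_zero_of_isZero_obj {C D : Type*} [Category C] [Category D]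
    [HasZeroMorphisms C] [HasZeroMorphisms D] {F : C ⥤ D} {G : D ⥤ C} (adj : F ⊣ G)
    {X : C} {Y : D} (hX : IsZero (F.obj X)) (g : X ⟶ G.obj Y) : g = 0 :=
  (adj.homEquiv X Y).symm.injective (hX.eq_of_src _ _)

noncomputable def interExt.ι (jstar : A ⥤ B) (jlow jup : B ⥤ A)
    (adj1 : jlow ⊣ jstar) (adj2 : jstar ⊣ jup) [IsIso adj2.counit] (N : B) :
    interExt jstar jlow jup adj1 adj2 N ⟶ jup.obj N :=
  image.ι _

instance (jstar : A ⥤ B) (jlow jup : B ⥤ A)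
    (adj1 : jlow ⊣ jstar) (adj2 : jstar ⊣ jup) [IsIso adj2.counit] (N : B) :
    Mono (interExt.ι jstar jlow jup adj1 adj2 N) :=
  inferInstanceAs (Mono (image.ι _))

theorem interExt_no_subobject_supported_general
    (jstar : A ⥤ B) (jlow jup : B ⥤ A)
    (adj1 : jlow ⊣ jstar) (adj2 : jstar ⊣ jup)
    [IsIso adj2.counit]
    (N : B) (X : A) (f : X ⟶ interExt jstar jlow jup adj1 adj2 N) [Mono f]
    (hX : IsZero (jstar.obj X)) :
    IsZero X :=
  IsZero.of_mono_eq_zero (f ≫ interExt.ι jstar jlow jup adj1 adj2 N)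
    (adj2.eq_zero_of_isZero_obj hX _)

/-- the intermediate extension `j_!* N` admits no nonzero subobject
supported on `Z`: if `X ↪ j_!* N` is a monomorphism with `j^* X ≅ 0`, then
`X ≅ 0`. -/
theorem interExt_no_subobject_supported
    (jstar : A ⥤ B) (jlow jup : B ⥤ A)
    (adj1 : jlow ⊣ jstar) (adj2 : jstar ⊣ jup)
    [IsIso adj1.unit] [IsIso adj2.counit]
    [PreservesFiniteLimits jstar] [PreservesFiniteColimits jstar]
    (N : B) (X : A) (f : X ⟶ interExt jstar jlow jup adj1 adj2 N) [Mono f]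
    (hX : IsZero (jstar.obj X)) :
    IsZero X :=
  interExt_no_subobject_supported_general jstar jlow jup adj1 adj2 N X f hX
end

section
/- With abelian recollement gluing data, for every object N of 𝒜_U the intermediate extension j_!* N admits no nonzero quotient supported on Z: if j_!* N ↠ Q is an epimorphism in 𝒜 with j^* Q ≅ 0, then Q ≅ 0. -/
/-!
Abelian recollement gluing data, abstracting the open immersion `j : U → S`:
abelian categories `A` and `B` (the latter playing the role of `𝒜_U`), an exact
functor `jstar : A ⥤ B` with a left adjoint `jlow` (`j_!`) and a right adjoint
`jup` (`j_*`), such that the unit of `j_! ⊣ j^*` and the counit of `j^* ⊣ j_*`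
are isomorphisms.  For `N : B`, `cmap N : j_! N ⟶ j_* N` is the unique morphism
whose image under `j^*` is `id_N` (under the canonical identifications), and the
intermediate extension `j_!* N` is its image.  "`X` is supported on `Z`" means
`j^* X ≅ 0`, i.e. `IsZero (jstar.obj X)`.
-/

open CategoryTheory CategoryTheory.Limits

variable {A : Type*} [Category A] [Abelian A]
variable {B : Type*} [Category B] [Abelian B]

namespace CategoryTheory.Adjunction

variable {C D : Type*} [Category C] [Category D] [HasZeroMorphisms D] {F : C ⥤ D} {G : D ⥤ C}

theorem eq_zero_of_isZero_right_obj (adj : F ⊣ G) {X : C} {Y : D} (f : F.obj X ⟶ Y)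
    (hY : IsZero (G.obj Y)) : f = 0 :=
  (adj.homEquiv X Y).injective (hY.eq_of_tgt _ _)

theorem isZero_of_epi_of_isZero_right_obj (adj : F ⊣ G) {X : C} {Y : D} (f : F.obj X ⟶ Y)
    [Epi f] (hY : IsZero (G.obj Y)) : IsZero Y :=
  IsZero.of_epi_eq_zero f (adj.eq_zero_of_isZero_right_obj f hY)

end CategoryTheory.Adjunction

theorem interExt_no_quotient_supported_general
    (jstar : A ⥤ B) (jlow jup : B ⥤ A)
    (adj1 : jlow ⊣ jstar) (adj2 : jstar ⊣ jup)
    [IsIso adj2.counit]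
    (N : B) (Q : A) (g : interExt jstar jlow jup adj1 adj2 N ⟶ Q) [Epi g]
    (hQ : IsZero (jstar.obj Q)) :
    IsZero Q := by
  let q : jlow.obj N ⟶ Q := factorThruImage (cmap jstar jlow jup adj1 adj2 N) ≫ g
  have : Epi q := epi_comp' inferInstance ‹Epi g›
  exact adj1.isZero_of_epi_of_isZero_right_obj q hQ

/-- the intermediate extension `j_!* N` admits no nonzero quotient
supported on `Z`: if `j_!* N ↠ Q` is an epimorphism with `j^* Q ≅ 0`, then
`Q ≅ 0`. -/
theorem interExt_no_quotient_supported
    (jstar : A ⥤ B) (jlow jup : B ⥤ A)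
    (adj1 : jlow ⊣ jstar) (adj2 : jstar ⊣ jup)
    [IsIso adj1.unit] [IsIso adj2.counit]
    [PreservesFiniteLimits jstar] [PreservesFiniteColimits jstar]
    (N : B) (Q : A) (g : interExt jstar jlow jup adj1 adj2 N ⟶ Q) [Epi g]
    (hQ : IsZero (jstar.obj Q)) :
    IsZero Q :=
  interExt_no_quotient_supported_general jstar jlow jup adj1 adj2 N Q g hQ
end

section
/- With abelian recollement gluing data, if an object M of 𝒜 has no nonzero subobject supported on Z and no nonzero quotient supported on Z, then the counit j_! j^* M → M is an epimorphism, the unit M → j_* j^* M is a monomorphism, their composite equals the canonical morphism c_{j^* M} : j_! j^* M → j_* j^* M, and consequently M is canonically isomorphic to j_!*(j^* M). (This is the categorical content of the lemma that a smooth mixed motive M is canonically isomorphic to j_!* j^* M.) -/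
/-!
Abelian recollement gluing data, abstracting the open immersion `j : U → S`:
abelian categories `A` and `B` (the latter playing the role of `𝒜_U`), an exact
functor `jstar : A ⥤ B` with a left adjoint `jlow` (`j_!`) and a right adjoint
`jup` (`j_*`), such that the unit of `j_! ⊣ j^*` and the counit of `j^* ⊣ j_*`
are isomorphisms.  For `N : B`, `cmap N : j_! N ⟶ j_* N` is the unique morphism
whose image under `j^*` is `id_N` (under the canonical identifications), and the
intermediate extension `j_!* N` is its image.  "`X` is supported on `Z`" means
`j^* X ≅ 0`, i.e. `IsZero (jstar.obj X)`.
-/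

open CategoryTheory CategoryTheory.Limits

variable {A : Type*} [Category A] [Abelian A]
variable {B : Type*} [Category B] [Abelian B]

/-!
The triangle identities make `j^*` of the counit `j_! j^* M ⟶ M` a split epimorphism and `j^*`
of the unit `M ⟶ j_* j^* M` a split monomorphism. As `j^*` is exact, the cokernel of the counit
and the kernel of the unit are then supported on `Z`, hence zero by assumption on `M`. The
composite of counit and unit is `c_{j^* M}` by naturality, so the comparison map
`j_!* j^* M ⟶ M` is a monomorphism through which the epimorphic counit factors, hence an
isomorphism.
-/

namespace CategoryTheory

theorem Adjunction.isSplitMono_map_unit_app {C D : Type*} [Category C] [Category D]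
    {L : C ⥤ D} {R : D ⥤ C} (adj : L ⊣ R) (X : C) : IsSplitMono (L.map (adj.unit.app X)) :=
  ⟨⟨⟨adj.counit.app (L.obj X), adj.left_triangle_components X⟩⟩⟩

theorem Adjunction.isSplitEpi_map_counit_app {C D : Type*} [Category C] [Category D]
    {L : C ⥤ D} {R : D ⥤ C} (adj : L ⊣ R) (Y : D) : IsSplitEpi (R.map (adj.counit.app Y)) :=
  ⟨⟨⟨adj.unit.app (R.obj Y), adj.right_triangle_components Y⟩⟩⟩

section SupportedOnZero

variable {C D : Type*} [Category C] [Abelian C] [Category D] [Abelian D]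
  (F : C ⥤ D) [F.PreservesZeroMorphisms]

theorem Functor.mono_of_mono_map_of_no_supported_subobject {X Y : C} (f : X ⟶ Y)
    [PreservesLimit (parallelPair f 0) F] [Mono (F.map f)]
    (hsub : ∀ (K : C) (k : K ⟶ X) [Mono k], IsZero (F.obj K) → IsZero K) : Mono f := by
  have hker : IsZero (Limits.kernel f) :=
    hsub _ (kernel.ι f) <| (isZero_zero D).of_iso (PreservesKernel.iso F f ≪≫ kernel.ofMono _)
  exact Abelian.mono_of_kernel_ι_eq_zero f (hker.eq_zero_of_src _)

theorem Functor.epi_of_epi_map_of_no_supported_quotient {X Y : C} (f : X ⟶ Y)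
    [PreservesColimit (parallelPair f 0) F] [Epi (F.map f)]
    (hquo : ∀ (Q : C) (q : Y ⟶ Q) [Epi q], IsZero (F.obj Q) → IsZero Q) : Epi f := by
  have hcoker : IsZero (Limits.cokernel f) :=
    hquo _ (cokernel.π f) <| (isZero_zero D).of_iso (PreservesCokernel.iso F f ≪≫ cokernel.ofEpi _)
  exact Abelian.epi_of_cokernel_π_eq_zero f (hcoker.eq_zero_of_tgt _)

end SupportedOnZero

end CategoryTheory

namespace CategoryTheory.Limits

theorem isIso_image_lift_of_epi {C : Type*} [Category C] [Balanced C] {X Y : C} {f : X ⟶ Y}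
    [HasImage f] (F : MonoFactorisation f) [Epi F.e] : IsIso (image.lift F) :=
  have : Epi (image.lift F) := epi_of_epi_fac (image.fac_lift F)
  isIso_of_mono_of_epi _

end CategoryTheory.Limits

theorem counit_app_comp_unit_app_eq_cmap {C D : Type*} [Category C] [Category D]
    (jstar : C ⥤ D) (jlow jup : D ⥤ C)
    (adj1 : jlow ⊣ jstar) (adj2 : jstar ⊣ jup) [IsIso adj2.counit] (M : C) :
    adj1.counit.app M ≫ adj2.unit.app M = cmap jstar jlow jup adj1 adj2 (jstar.obj M) := by
  have hinv : jstar.map (adj2.unit.app M) = inv (adj2.counit.app (jstar.obj M)) :=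
    IsIso.eq_inv_of_inv_hom_id (adj2.left_triangle_components M)
  rw [cmap, Adjunction.homEquiv_counit, ← hinv, adj1.counit_naturality]
  rfl

theorem isIso_interExt_comparison_of_no_supported_sub_quotient_general
    (jstar : A ⥤ B) (jlow jup : B ⥤ A)
    (adj1 : jlow ⊣ jstar) (adj2 : jstar ⊣ jup)
    [IsIso adj2.counit]
    [PreservesFiniteLimits jstar] [PreservesFiniteColimits jstar]
    (M : A)
    (hsub : ∀ (Y : A) (f : Y ⟶ M) [Mono f], IsZero (jstar.obj Y) → IsZero Y)
    (hquo : ∀ (Q : A) (g : M ⟶ Q) [Epi g], IsZero (jstar.obj Q) → IsZero Q) :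
    Epi (adj1.counit.app M) ∧
    Mono (adj2.unit.app M) ∧
    ∃ hfac : adj1.counit.app M ≫ adj2.unit.app M =
        cmap jstar jlow jup adj1 adj2 (jstar.obj M),
      ∀ hm : Mono (adj2.unit.app M),
        IsIso (image.lift
          { I := M
            m := adj2.unit.app M
            m_mono := hm
            e := adj1.counit.app M
            fac := hfac }) := by
  have := adj1.isSplitEpi_map_counit_app M
  have := adj2.isSplitMono_map_unit_app M
  have := jstar.epi_of_epi_map_of_no_supported_quotient (adj1.counit.app M) hquo
  exact ⟨this, jstar.mono_of_mono_map_of_no_supported_subobject (adj2.unit.app M) hsub,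
    counit_app_comp_unit_app_eq_cmap jstar jlow jup adj1 adj2 M,
    fun _ => isIso_image_lift_of_epi _⟩

/-- if `M` has no nonzero subobject supported on `Z` and no nonzero
quotient supported on `Z`, then the counit `j_! j^* M → M` is an epimorphism,
the unit `M → j_* j^* M` is a monomorphism, their composite equals the canonical
morphism `c_{j^* M} : j_! j^* M ⟶ j_* j^* M`, and consequently the resulting
mono factorisation exhibits `M` as (canonically isomorphic to) `j_!*(j^* M)`:
the comparison map `j_!*(j^* M) ⟶ M` induced by the image property is an
isomorphism. -/
theorem isIso_interExt_comparison_of_no_supported_sub_quotient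
    (jstar : A ⥤ B) (jlow jup : B ⥤ A)
    (adj1 : jlow ⊣ jstar) (adj2 : jstar ⊣ jup)
    [IsIso adj1.unit] [IsIso adj2.counit]
    [PreservesFiniteLimits jstar] [PreservesFiniteColimits jstar]
    (M : A)
    (hsub : ∀ (Y : A) (f : Y ⟶ M) [Mono f], IsZero (jstar.obj Y) → IsZero Y)
    (hquo : ∀ (Q : A) (g : M ⟶ Q) [Epi g], IsZero (jstar.obj Q) → IsZero Q) :
    Epi (adj1.counit.app M) ∧
    Mono (adj2.unit.app M) ∧
    ∃ hfac : adj1.counit.app M ≫ adj2.unit.app M =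
        cmap jstar jlow jup adj1 adj2 (jstar.obj M),
      ∀ hm : Mono (adj2.unit.app M),
        IsIso (image.lift
          { I := M
            m := adj2.unit.app M
            m_mono := hm
            e := adj1.counit.app M
            fac := hfac }) :=
  isIso_interExt_comparison_of_no_supported_sub_quotient_general jstar jlow jup adj1 adj2 M hsub
    hquo
end

section
/- Intermediate extensions compose (second assertion of the lemma on properties of j_!*): given two composable gluing data — j₂ between 𝒜_{U''} and 𝒜_{U'}, and j₁ between 𝒜_{U'} and 𝒜 — the composite functors j^* := j₂^* ∘ j₁^*, j_! := j₁_! ∘ j₂_!, j_* := j₁_* ∘ j₂_* again form abelian recollement gluing data, and for every object N of 𝒜_{U''} there is a canonical isomorphism (j₁ ∘ j₂)_!* N ≅ j₁_!*( j₂_!* N ) between the intermediate extension for the composite data and the composite of the two intermediate extensions. -/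
/-!
Abelian recollement gluing data, abstracting the open immersion `j : U → S`:
abelian categories `A` and `B` (the latter playing the role of `𝒜_U`), an exact
functor `jstar : A ⥤ B` with a left adjoint `jlow` (`j_!`) and a right adjoint
`jup` (`j_*`), such that the unit of `j_! ⊣ j^*` and the counit of `j^* ⊣ j_*`
are isomorphisms.  For `N : B`, `cmap N : j_! N ⟶ j_* N` is the unique morphism
whose image under `j^*` is `id_N` (under the canonical identifications), and the
intermediate extension `j_!* N` is its image.  "`X` is supported on `Z`" means
`j^* X ≅ 0`, i.e. `IsZero (jstar.obj X)`.
-/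

open CategoryTheory CategoryTheory.Limits

variable {A : Type*} [Category A] [Abelian A]
variable {B : Type*} [Category B] [Abelian B]

/-!
Write `c¹`, `c²` for the canonical maps of the two gluing data. By adjunction, the canonical map
of the composite data is `j₁_!(c²_N) ≫ c¹_{j₂_* N}`. Factor `c²_N = e ≫ m` through its image;
naturality of `c¹` turns the composite into `j₁_!(e) ≫ c¹_{j₂_!* N} ≫ j₁_*(m)`, and factoring
`c¹_{j₂_!* N} = e' ≫ m'` exhibits it as the epimorphism `j₁_!(e) ≫ e'` followed by the
monomorphism `m' ≫ j₁_*(m)` (left adjoints preserve epimorphisms, right adjoints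
monomorphisms). In an abelian category such a factorisation is the image factorisation, so its
middle object `j₁_!*(j₂_!* N)` is the image of the composite canonical map.
-/

noncomputable def CategoryTheory.Abelian.imageIsoOfEpiMono {X Y I : A} {f : X ⟶ Y} (e : X ⟶ I)
    (m : I ⟶ Y) [Epi e] [Mono m] (fac : e ≫ m = f) : image f ≅ I :=
  have := strongEpi_of_epi e
  (image.isoStrongEpiMono e m fac).symm

namespace CategoryTheory.Adjunction

variable {C D E : Type*} [Category C] [Category D] [Category E]
  {F : C ⥤ D} {G : D ⥤ C} {H : D ⥤ E} {I : E ⥤ D}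

instance isIso_comp_unit (adj₁ : F ⊣ G) (adj₂ : H ⊣ I) [IsIso adj₁.unit] [IsIso adj₂.unit] :
    IsIso (adj₁.comp adj₂).unit := by
  have (X : C) : IsIso ((adj₁.comp adj₂).unit.app X) := by
    rw [comp_unit_app]; infer_instance
  exact NatIso.isIso_of_isIso_app _

instance isIso_comp_counit (adj₁ : F ⊣ G) (adj₂ : H ⊣ I) [IsIso adj₁.counit]
    [IsIso adj₂.counit] : IsIso (adj₁.comp adj₂).counit := by
  have (X : E) : IsIso ((adj₁.comp adj₂).counit.app X) := by
    rw [comp_counit_app]; infer_instance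
  exact NatIso.isIso_of_isIso_app _

end CategoryTheory.Adjunction

section CanonicalMap

omit [Abelian A] [Abelian B]

variable (jstar : A ⥤ B) (jlow jup : B ⥤ A) (adj1 : jlow ⊣ jstar) (adj2 : jstar ⊣ jup)
  [IsIso adj2.counit]

theorem homEquiv_cmap (N : B) :
    adj1.homEquiv N (jup.obj N) (cmap jstar jlow jup adj1 adj2 N) = inv (adj2.counit.app N) := by
  simp [cmap]

theorem cmap_naturality {N N' : B} (f : N ⟶ N') :
    jlow.map f ≫ cmap jstar jlow jup adj1 adj2 N'
      = cmap jstar jlow jup adj1 adj2 N ≫ jup.map f := by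
  apply (adj1.homEquiv N (jup.obj N')).injective
  rw [adj1.homEquiv_naturality_left, adj1.homEquiv_naturality_right, homEquiv_cmap,
    homEquiv_cmap, IsIso.eq_inv_comp, ← Category.assoc, IsIso.comp_inv_eq]
  exact (adj2.counit.naturality f).symm

end CanonicalMap

section Composite

variable {C : Type*} [Category C]
  (j1star : A ⥤ B) (j1low j1up : B ⥤ A) (adjA1 : j1low ⊣ j1star) (adjA2 : j1star ⊣ j1up)
  [IsIso adjA2.counit]
  (j2star : B ⥤ C) (j2low j2up : C ⥤ B) (adjB1 : j2low ⊣ j2star) (adjB2 : j2star ⊣ j2up)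
  [IsIso adjB2.counit]

omit [Abelian A] [Abelian B] in
theorem cmap_comp (N : C) :
    cmap (j1star ⋙ j2star) (j2low ⋙ j1low) (j2up ⋙ j1up) (adjB1.comp adjA1) (adjA2.comp adjB2) N
      = j1low.map (cmap j2star j2low j2up adjB1 adjB2 N)
          ≫ cmap j1star j1low j1up adjA1 adjA2 (j2up.obj N) := by
  apply ((adjB1.comp adjA1).homEquiv _ _).injective
  rw [homEquiv_cmap, Adjunction.comp_homEquiv, Equiv.trans_apply,
    adjA1.homEquiv_naturality_left, adjB1.homEquiv_naturality_right]
  simp only [Functor.comp_obj, homEquiv_cmap, Adjunction.comp_counit_app, IsIso.inv_comp,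
    Functor.map_inv]

theorem cmap_comp_eq_image_factorisation (N : C) :
    cmap (j1star ⋙ j2star) (j2low ⋙ j1low) (j2up ⋙ j1up) (adjB1.comp adjA1) (adjA2.comp adjB2) N
      = (j1low.map (factorThruImage (cmap j2star j2low j2up adjB1 adjB2 N))
            ≫ factorThruImage (cmap j1star j1low j1up adjA1 adjA2
              (image (cmap j2star j2low j2up adjB1 adjB2 N))))
          ≫ image.ι (cmap j1star j1low j1up adjA1 adjA2
              (image (cmap j2star j2low j2up adjB1 adjB2 N)))
          ≫ j1up.map (image.ι (cmap j2star j2low j2up adjB1 adjB2 N)) := by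
  rw [cmap_comp, Category.assoc, image.fac_assoc, ← cmap_naturality, ← Functor.map_comp_assoc,
    image.fac]

end Composite

theorem interExt_comp_general
    {C : Type*} [Category C]
    (j1star : A ⥤ B) (j1low j1up : B ⥤ A)
    (adjA1 : j1low ⊣ j1star) (adjA2 : j1star ⊣ j1up)
    [IsIso adjA1.unit] [IsIso adjA2.counit]
    (j2star : B ⥤ C) (j2low j2up : C ⥤ B)
    (adjB1 : j2low ⊣ j2star) (adjB2 : j2star ⊣ j2up)
    [IsIso adjB1.unit] [IsIso adjB2.counit] :
    IsIso (adjB1.comp adjA1).unit ∧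
    ∃ h2 : IsIso (adjA2.comp adjB2).counit,
      ∀ N : C, Nonempty
        ((@interExt A _ _ C _ (j1star ⋙ j2star) (j2low ⋙ j1low) (j2up ⋙ j1up)
            (adjB1.comp adjA1) (adjA2.comp adjB2) h2 N) ≅
          interExt j1star j1low j1up adjA1 adjA2
            (interExt j2star j2low j2up adjB1 adjB2 N)) := by
  refine ⟨inferInstance, inferInstance, fun N => ?_⟩
  have := j1low.preservesEpimorphisms_of_adjunction adjA1
  have := j1up.preservesMonomorphisms_of_adjunction adjA2
  unfold interExt
  exact ⟨Abelian.imageIsoOfEpiMono _ _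
    (cmap_comp_eq_image_factorisation j1star j1low j1up adjA1 adjA2 j2star j2low j2up adjB1 adjB2
      N).symm⟩

/-- intermediate extensions compose.  Given two composable gluing
data — `j₂` between `𝒜_{U''} = C` and `𝒜_{U'} = B`, and `j₁` between
`𝒜_{U'} = B` and `𝒜 = A` — the composite functors
`j^* = j₂^* ∘ j₁^*`, `j_! = j₁_! ∘ j₂_!`, `j_* = j₁_* ∘ j₂_*` again form
abelian recollement gluing data (the composite unit and counit are
isomorphisms), and for every `N` there is an isomorphism
`(j₁ ∘ j₂)_!* N ≅ j₁_!*(j₂_!* N)`. -/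
theorem interExt_comp
    {C : Type*} [Category C] [Abelian C]
    (j1star : A ⥤ B) (j1low j1up : B ⥤ A)
    (adjA1 : j1low ⊣ j1star) (adjA2 : j1star ⊣ j1up)
    [IsIso adjA1.unit] [IsIso adjA2.counit]
    [PreservesFiniteLimits j1star] [PreservesFiniteColimits j1star]
    (j2star : B ⥤ C) (j2low j2up : C ⥤ B)
    (adjB1 : j2low ⊣ j2star) (adjB2 : j2star ⊣ j2up)
    [IsIso adjB1.unit] [IsIso adjB2.counit]
    [PreservesFiniteLimits j2star] [PreservesFiniteColimits j2star] :
    IsIso (adjB1.comp adjA1).unit ∧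
    ∃ h2 : IsIso (adjA2.comp adjB2).counit,
      ∀ N : C, Nonempty
        ((@interExt A _ _ C _ (j1star ⋙ j2star) (j2low ⋙ j1low) (j2up ⋙ j1up)
            (adjB1.comp adjA1) (adjA2.comp adjB2) h2 N) ≅
          interExt j1star j1low j1up adjA1 adjA2
            (interExt j2star j2low j2up adjB1 adjB2 N)) :=
  interExt_comp_general j1star j1low j1up adjA1 adjA2 j2star j2low j2up adjB1 adjB2
end

section
/- In an abelian category with a functorial, finite, strict weight filtration, the image of a morphism from an object of weights ≤ w to an object of weights ≥ w is pure of weight w: if f : P → Q is a morphism with W_w P = P and W_{w-1} Q = 0, then W_w(Im f) = Im f and W_{w-1}(Im f) = 0. (Applied to the canonical map j_! N → j_* N, whose source has weights ≤ w and whose target has weights ≥ w when N is pure of weight w, this is the lemma that the intermediate extension j_!* preserves weights of pure objects.) -/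
/-!
`Im f` is a quotient of `P` and a subobject of `Q`. Functoriality of `W` alone shows that
weights `≤ w` pass to quotients (the image of `W M w = M` under an epimorphism is everything)
and weights `≥ w` pass to subobjects (a monomorphism embeds `W M (w-1)` into `W N (w-1) = 0`).
-/

open CategoryTheory CategoryTheory.Limits

section ImageSubobject

variable {C : Type*} [Category C] {X Y : C}

theorem imageSubobject_eq_top_of_epi [Balanced C] (g : X ⟶ Y) [HasImage g] [Epi g] :
    imageSubobject g = ⊤ := by
  have : Epi (image.ι g) := epi_of_epi_fac (image.fac g)
  exact (Subobject.epi_iff_mk_eq_top (image.ι g)).mp this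

theorem Subobject.eq_bot_of_imageSubobject_arrow_comp_mono [HasZeroMorphisms C] [HasZeroObject C]
    (S : Subobject X) (g : X ⟶ Y) [Mono g] (h : imageSubobject (S.arrow ≫ g) = ⊥) : S = ⊥ := by
  rw [imageSubobject_mono, Subobject.mk_eq_bot_iff_zero] at h
  rw [← Subobject.mk_arrow S, Subobject.mk_eq_bot_iff_zero]
  exact zero_of_comp_mono g h

end ImageSubobject

section WeightFiltration

variable {𝒜 : Type*} [Category 𝒜] [Abelian 𝒜] (W : ∀ M : 𝒜, ℤ → Subobject M)
  (hfunc : ∀ {M M' : 𝒜} (f : M ⟶ M') (n : ℤ), imageSubobject ((W M n).arrow ≫ f) ≤ W M' n)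
include hfunc

theorem weight_eq_top_of_epi {M N : 𝒜} (g : M ⟶ N) [Epi g] (n : ℤ) (hM : W M n = ⊤) :
    W N n = ⊤ := by
  have himage : imageSubobject ((W M n).arrow ≫ g) = ⊤ := by
    rw [hM, imageSubobject_iso_comp, imageSubobject_eq_top_of_epi]
  exact top_le_iff.mp (himage ▸ hfunc g n)

theorem weight_eq_bot_of_mono {M N : 𝒜} (g : M ⟶ N) [Mono g] (n : ℤ) (hN : W N n = ⊥) :
    W M n = ⊥ :=
  Subobject.eq_bot_of_imageSubobject_arrow_comp_mono _ g (le_bot_iff.mp (hN ▸ hfunc g n))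

end WeightFiltration

theorem image_pure_of_weights_le_ge_general
    {𝒜 : Type*} [Category 𝒜] [Abelian 𝒜]
    (W : ∀ M : 𝒜, ℤ → Subobject M)
    (hfunc : ∀ {M M' : 𝒜} (f : M ⟶ M') (n : ℤ),
      imageSubobject ((W M n).arrow ≫ f) ≤ W M' n)
    {P Q : 𝒜} (f : P ⟶ Q) (w : ℤ)
    (hP : W P w = ⊤) (hQ : W Q (w - 1) = ⊥) :
    W (image f) w = ⊤ ∧ W (image f) (w - 1) = ⊥ :=
  ⟨weight_eq_top_of_epi W hfunc (factorThruImage f) w hP,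
    weight_eq_bot_of_mono W hfunc (image.ι f) (w - 1) hQ⟩

/-- in an abelian category with a functorial, finite, strict
weight filtration, the image of a morphism from an object of weights ≤ w to an
object of weights ≥ w is pure of weight `w`: if `f : P ⟶ Q` with `W P w = ⊤`
(weights ≤ w) and `W Q (w-1) = ⊥` (weights ≥ w), then the weight filtration of
the object `Im f` satisfies `W (Im f) w = ⊤` and `W (Im f) (w-1) = ⊥`. -/
theorem image_pure_of_weights_le_ge
    {𝒜 : Type*} [Category 𝒜] [Abelian 𝒜]
    (W : ∀ M : 𝒜, ℤ → Subobject M)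
    (hmono : ∀ M : 𝒜, Monotone (W M))
    (hbot : ∀ M : 𝒜, ∃ a : ℤ, ∀ n ≤ a, W M n = ⊥)
    (htop : ∀ M : 𝒜, ∃ b : ℤ, ∀ n, b ≤ n → W M n = ⊤)
    (hfunc : ∀ {M M' : 𝒜} (f : M ⟶ M') (n : ℤ),
      imageSubobject ((W M n).arrow ≫ f) ≤ W M' n)
    (hstrict : ∀ {M M' : 𝒜} (f : M ⟶ M') (n : ℤ),
      imageSubobject ((W M n).arrow ≫ f) = imageSubobject f ⊓ W M' n)
    {P Q : 𝒜} (f : P ⟶ Q) (w : ℤ)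
    (hP : W P w = ⊤) (hQ : W Q (w - 1) = ⊥) :
    W (image f) w = ⊤ ∧ W (image f) (w - 1) = ⊥ :=
  image_pure_of_weights_le_ge_general W hfunc f w hP hQ
end
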